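/- Let X be a smooth cubic surface over a field k with a k-line L and associated conic bundle f : X → P¹. Suppose s is a section of f. Then the 10 lines of X̄ meeting L split into two Galois-invariant sets 𝔏₁ and 𝔏₂ of 5 pairwise skew lines each, obtained by taking in each degenerate fibre the component met (resp. not met) by s, and (𝔏₁ + 𝔏₂)·s = 5 in Pic(X̄). -/

import Mathlib

/-!
Model: the Picard group of a smooth cubic surface over a separably closed
field is identified with `ℤ⁷ = Fin 7 → ℤ` with its standard basis
`λ₀, L₁, …, L₆` (pullback of a line and the six exceptional classes),
intersection form `picInter`, canonical class `KX = -3λ₀ + L₁ + ⋯ + L₆`.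
The classes of the 27 lines are exactly the classes `l` with
`l·l = -1` and `KX·l = -1`.
-/

def picInter (a b : Fin 7 → ℤ) : ℤ := a 0 * b 0 - ∑ i : Fin 6, a i.succ * b i.succ

def KX : Fin 7 → ℤ := ![-3, 1, 1, 1, 1, 1, 1]

def IsLineClass (l : Fin 7 → ℤ) : Prop := picInter l l = -1 ∧ picInter KX l = -1

/-!
Galois model: for a smooth cubic surface `X` over a field `k`, split by a
finite Galois extension with group `G`, the Galois action on the geometric
Picard group is a homomorphism `ρ : G →* AddAut (Fin 7 → ℤ)` preserving the
intersection form, the canonical class and the set of line classes.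
`Pic(X)` is identified with the fixed subgroup `fixedSubgroup ρ`, and the
subgroup `Δ ⊆ Pic(X)` generated by norms (from finite separable extensions)
of lines is `Delta ρ`: the subgroup generated by the Galois-orbit sums
(= norms from the field of definition) of the 27 line classes.
-/

variable {G : Type*} [Group G] [Fintype G]

noncomputable def normOrbit (ρ : G →* Multiplicative (AddAut (Fin 7 → ℤ))) (l : Fin 7 → ℤ) : Fin 7 → ℤ :=
  ∑ m ∈ Finset.image (fun g => (ρ g).toAdd l) Finset.univ, m

noncomputable def Delta (ρ : G →* Multiplicative (AddAut (Fin 7 → ℤ))) : AddSubgroup (Fin 7 → ℤ) :=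
  AddSubgroup.closure { x | ∃ l, IsLineClass l ∧ x = normOrbit ρ l }

def fixedSubgroup (ρ : G →* Multiplicative (AddAut (Fin 7 → ℤ))) : AddSubgroup (Fin 7 → ℤ) where
  carrier := {x | ∀ g, (ρ g).toAdd x = x}
  zero_mem' := fun g => map_zero (ρ g).toAdd
  add_mem' := fun {a b} ha hb g => by rw [map_add, ha g, hb g]
  neg_mem' := fun {a} ha g => by rw [map_neg, ha g]

/-!
Write `F = -K - L` for the fibre class. The lines meeting `L` are the components of the
degenerate fibres, and `m ↦ F - m` exchanges the two components of each fibre. Since `K⊥` is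
negative definite, distinct lines meeting `L` that do not lie in the same fibre are skew.
As `s·F = 1` and `s` meets every component non-negatively, `s` meets exactly one component of
each fibre, so the involution swaps the lines met by `s` with those it misses. There are ten
lines meeting `L`: the 27 line classes lie in a small box of coordinates and can be enumerated.
-/

lemma picInter_comm (a b : Fin 7 → ℤ) : picInter a b = picInter b a := by
  simp only [picInter, mul_comm]

lemma picInter_sub_left (a b c : Fin 7 → ℤ) :
    picInter (a - b) c = picInter a c - picInter b c := by
  simp only [picInter, Pi.sub_apply, sub_mul, Finset.sum_sub_distrib]; ring

lemma picInter_neg_left (a b : Fin 7 → ℤ) : picInter (-a) b = -picInter a b := by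
  simp only [picInter, Pi.neg_apply, neg_mul, Finset.sum_neg_distrib]; ring

lemma picInter_sub_right (a b c : Fin 7 → ℤ) :
    picInter a (b - c) = picInter a b - picInter a c := by
  rw [picInter_comm, picInter_sub_left, picInter_comm b, picInter_comm c]

lemma picInter_neg_right (a b : Fin 7 → ℤ) : picInter a (-b) = -picInter a b := by
  rw [picInter_comm, picInter_neg_left, picInter_comm]

lemma picInter_KX_KX : picInter KX KX = 3 := by decide

lemma picInter_KX_left (l : Fin 7 → ℤ) : picInter KX l = -3 * l 0 - ∑ j : Fin 6, l j.succ := by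
  have hKX : ∀ j : Fin 6, KX j.succ = 1 := by decide
  simp only [picInter, hKX, one_mul]
  rfl

lemma sq_sum_succ_le (v : Fin 7 → ℤ) :
    (∑ j : Fin 6, v j.succ) ^ 2 ≤ 6 * ∑ j : Fin 6, v j.succ ^ 2 := by
  simpa using sq_sum_le_card_mul_sum_sq (s := Finset.univ) (f := fun j : Fin 6 => v j.succ)

lemma picInter_self_neg_of_perp_KX {v : Fin 7 → ℤ} (hKv : picInter KX v = 0) (hv : v ≠ 0) :
    picInter v v < 0 := by
  rw [picInter_KX_left] at hKv
  have hCS := sq_sum_succ_le v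
  have hsum : ∑ j : Fin 6, v j.succ = -3 * v 0 := by linarith
  simp only [picInter, ← sq]
  by_contra! hnonneg
  have hv0 : v 0 = 0 := by nlinarith
  have hvsucc : ∀ j : Fin 6, v j.succ = 0 := by
    have hsq : ∑ j : Fin 6, v j.succ ^ 2 = 0 :=
      le_antisymm (by nlinarith) (Finset.sum_nonneg fun j _ => sq_nonneg _)
    intro j
    exact pow_eq_zero_iff two_ne_zero |>.mp <|
      (Finset.sum_eq_zero_iff_of_nonneg fun j _ => sq_nonneg _).mp hsq j (Finset.mem_univ j)
  exact hv <| funext fun i => Fin.cases hv0 hvsucc i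

lemma zero_le_mul_add_one (x : ℤ) : 0 ≤ x * (x + 1) := by
  rcases le_or_gt 0 x with h | h <;> nlinarith

instance (l : Fin 7 → ℤ) : Decidable (IsLineClass l) :=
  inferInstanceAs (Decidable (_ ∧ _))

def lineBox : Finset (Fin 7 → ℤ) :=
  Fintype.piFinset fun i : Fin 7 => if i = 0 then ({0, 1, 2} : Finset ℤ) else {-1, 0, 1}

/-- From `K·l = -1` and `l·l = -1`: `∑ lⱼ = 1 - 3l₀` and `∑ lⱼ² = l₀² + 1`, so Cauchy–Schwarz
bounds `l₀`, and then `∑ lⱼ(lⱼ + 1) = (l₀ - 1)(l₀ - 2)` or `∑ lⱼ(lⱼ - 1) = l₀(l₀ + 3)` vanishes. -/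
lemma IsLineClass.mem_lineBox {l : Fin 7 → ℤ} (h : IsLineClass l) : l ∈ lineBox := by
  obtain ⟨hll, hKl⟩ := h
  rw [picInter_KX_left] at hKl
  simp only [picInter, ← sq] at hll
  have hCS := sq_sum_succ_le l
  have h0 : 0 ≤ l 0 ∧ l 0 ≤ 2 := by constructor <;> nlinarith
  have hcoord : ∀ j : Fin 6, -1 ≤ l j.succ ∧ l j.succ ≤ 1 := by
    intro j
    have hplus := Finset.single_le_sum (fun k _ => zero_le_mul_add_one (l (Fin.succ k)))
      (Finset.mem_univ j)
    have hminus := Finset.single_le_sum (fun k _ => zero_le_mul_add_one (-l (Fin.succ k)))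
      (Finset.mem_univ j)
    simp only [mul_add, mul_one, neg_sq, Finset.sum_add_distrib, Finset.sum_neg_distrib,
      ← sq] at hplus hminus
    obtain h | h | h : l 0 = 0 ∨ l 0 = 1 ∨ l 0 = 2 := by omega
    all_goals rw [h] at hll hKl; constructor <;> nlinarith
  rw [lineBox, Fintype.mem_piFinset]
  intro i
  refine Fin.cases ?_ (fun j => ?_) i
  · simp only [↓reduceIte, Finset.mem_insert, Finset.mem_singleton]
    omega
  · simp only [Fin.succ_ne_zero, ↓reduceIte, Finset.mem_insert, Finset.mem_singleton]
    have := hcoord j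
    omega

def lineClasses : Finset (Fin 7 → ℤ) := lineBox.filter IsLineClass

lemma mem_lineClasses {l : Fin 7 → ℤ} : l ∈ lineClasses ↔ IsLineClass l := by
  simp only [lineClasses, Finset.mem_filter, and_iff_right_iff_imp]
  exact IsLineClass.mem_lineBox

set_option maxRecDepth 100000 in
lemma card_filter_meeting_lineClasses :
    ∀ L ∈ lineClasses, (lineClasses.filter fun m => m ≠ L ∧ picInter m L = 1).card = 10 := by
  decide

def meetingLines (L : Fin 7 → ℤ) : Set (Fin 7 → ℤ) :=
  {m | IsLineClass m ∧ m ≠ L ∧ picInter m L = 1}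

def fibreClass (L : Fin 7 → ℤ) : Fin 7 → ℤ := -KX - L

def linesMetBy (s L : Fin 7 → ℤ) : Set (Fin 7 → ℤ) := {m | m ∈ meetingLines L ∧ 0 < picInter s m}

def linesMissedBy (s L : Fin 7 → ℤ) : Set (Fin 7 → ℤ) := {m | m ∈ meetingLines L ∧ picInter s m = 0}

section MeetingLines

variable {L m m' : Fin 7 → ℤ}

lemma meetingLines_eq_coe (L : Fin 7 → ℤ) :
    meetingLines L = ↑(lineClasses.filter fun m => m ≠ L ∧ picInter m L = 1) := by
  ext m
  simp only [meetingLines, Set.mem_ofPred_eq, Finset.coe_filter, mem_lineClasses]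

lemma meetingLines_finite (L : Fin 7 → ℤ) : (meetingLines L).Finite := by
  rw [meetingLines_eq_coe]; exact Finset.finite_toSet _

lemma ncard_meetingLines (hL : IsLineClass L) : (meetingLines L).ncard = 10 := by
  rw [meetingLines_eq_coe, Set.ncard_coe_finset]
  exact card_filter_meeting_lineClasses L (mem_lineClasses.mpr hL)

lemma fibreClass_sub_mem_meetingLines (hL : IsLineClass L) (hm : m ∈ meetingLines L) :
    fibreClass L - m ∈ meetingLines L := by
  obtain ⟨hLL, hKL⟩ := hL
  obtain ⟨⟨hmm, hKm⟩, -, hmL⟩ := hm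
  have := picInter_KX_KX
  have := picInter_comm L KX
  have := picInter_comm m KX
  have := picInter_comm m L
  simp only [fibreClass, meetingLines, IsLineClass, Set.mem_ofPred_eq, picInter_sub_left,
    picInter_sub_right, picInter_neg_left, picInter_neg_right]
  refine ⟨⟨by linarith, by linarith⟩, fun h => ?_, by linarith⟩
  have hLm := congrArg (picInter L) h
  simp only [picInter_sub_right, picInter_neg_right] at hLm
  linarith

lemma picInter_eq_zero_of_mem_meetingLines (hL : IsLineClass L) (hm : m ∈ meetingLines L)
    (hm' : m' ∈ meetingLines L) (hne : m ≠ m') (hne' : m' ≠ fibreClass L - m) :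
    picInter m m' = 0 := by
  obtain ⟨hLL, hKL⟩ := hL
  obtain ⟨⟨hmm, hKm⟩, -, hmL⟩ := hm
  obtain ⟨⟨hm'm', hKm'⟩, -, hm'L⟩ := hm'
  have := picInter_KX_KX
  have := picInter_comm L KX
  have := picInter_comm m KX
  have := picInter_comm m' KX
  have := picInter_comm m L
  have := picInter_comm m' L
  have := picInter_comm m m'
  have hdiff := picInter_self_neg_of_perp_KX (v := m - m')
    (by rw [picInter_sub_right]; linarith) (sub_ne_zero.mpr hne)
  have hrest := picInter_self_neg_of_perp_KX (v := fibreClass L - m - m')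
    (by simp only [fibreClass, picInter_sub_right, picInter_neg_right]; linarith)
    (sub_ne_zero.mpr hne'.symm)
  simp only [fibreClass, picInter_sub_left, picInter_sub_right, picInter_neg_left,
    picInter_neg_right] at hdiff hrest
  have : -1 < picInter m m' := by linarith
  have : picInter m m' < 1 := by linarith
  omega

end MeetingLines

section ConicBundleSection

variable {L s m m' : Fin 7 → ℤ}

lemma meetingLines_eq_union (hsnn : ∀ m, IsLineClass m → picInter m L = 1 → 0 ≤ picInter s m) :
    meetingLines L = linesMetBy s L ∪ linesMissedBy s L := by
  ext m
  simp only [linesMetBy, linesMissedBy, Set.mem_union, Set.mem_ofPred_eq, ← and_or_left]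
  exact (and_iff_left_of_imp fun hm => (hsnn m hm.1 hm.2.2).lt_or_eq.imp id Eq.symm).symm

lemma disjoint_linesMetBy_linesMissedBy : Disjoint (linesMetBy s L) (linesMissedBy s L) :=
  Set.disjoint_left.mpr fun _ hpos hzero => hpos.2.ne' hzero.2

lemma picInter_section_fibreClass_sub (hsF : picInter s (fibreClass L) = 1) :
    picInter s (fibreClass L - m) = 1 - picInter s m := by
  rw [picInter_sub_right, hsF]

lemma picInter_section_eq_zero_or_one (hL : IsLineClass L)
    (hsF : picInter s (fibreClass L) = 1)
    (hsnn : ∀ m, IsLineClass m → picInter m L = 1 → 0 ≤ picInter s m)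
    (hm : m ∈ meetingLines L) : picInter s m = 0 ∨ picInter s m = 1 := by
  have hm' := fibreClass_sub_mem_meetingLines hL hm
  have := picInter_section_fibreClass_sub (m := m) hsF
  have := hsnn m hm.1 hm.2.2
  have := hsnn _ hm'.1 hm'.2.2
  omega

lemma picInter_section_eq_one_of_mem_linesMetBy (hL : IsLineClass L)
    (hsF : picInter s (fibreClass L) = 1)
    (hsnn : ∀ m, IsLineClass m → picInter m L = 1 → 0 ≤ picInter s m)
    (hm : m ∈ linesMetBy s L) : picInter s m = 1 :=
  (picInter_section_eq_zero_or_one hL hsF hsnn hm.1).resolve_left hm.2.ne'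

lemma image_fibreClass_sub_linesMetBy (hL : IsLineClass L)
    (hsF : picInter s (fibreClass L) = 1)
    (hsnn : ∀ m, IsLineClass m → picInter m L = 1 → 0 ≤ picInter s m) :
    (fibreClass L - ·) '' linesMetBy s L = linesMissedBy s L := by
  ext m
  constructor
  · rintro ⟨m, hm, rfl⟩
    refine ⟨fibreClass_sub_mem_meetingLines hL hm.1, ?_⟩
    rw [picInter_section_fibreClass_sub hsF,
      picInter_section_eq_one_of_mem_linesMetBy hL hsF hsnn hm, sub_self]
  · rintro ⟨hm, hzero⟩
    refine ⟨fibreClass L - m, ⟨fibreClass_sub_mem_meetingLines hL hm, ?_⟩, sub_sub_cancel _ _⟩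
    rw [picInter_section_fibreClass_sub hsF, hzero]
    exact one_pos

lemma ncard_linesMetBy_add_ncard_linesMissedBy (hL : IsLineClass L)
    (hsnn : ∀ m, IsLineClass m → picInter m L = 1 → 0 ≤ picInter s m) :
    (linesMetBy s L).ncard + (linesMissedBy s L).ncard = 10 := by
  have hfin := meetingLines_finite L
  rw [meetingLines_eq_union hsnn] at hfin
  rw [← Set.ncard_union_eq disjoint_linesMetBy_linesMissedBy (hfin.subset Set.subset_union_left)
    (hfin.subset Set.subset_union_right), ← meetingLines_eq_union hsnn, ncard_meetingLines hL]

lemma ncard_linesMissedBy_eq_ncard_linesMetBy (hL : IsLineClass L)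
    (hsF : picInter s (fibreClass L) = 1)
    (hsnn : ∀ m, IsLineClass m → picInter m L = 1 → 0 ≤ picInter s m) :
    (linesMissedBy s L).ncard = (linesMetBy s L).ncard := by
  rw [← image_fibreClass_sub_linesMetBy hL hsF hsnn]
  exact Set.ncard_image_of_injective _ sub_right_injective

lemma ncard_linesMetBy (hL : IsLineClass L) (hsF : picInter s (fibreClass L) = 1)
    (hsnn : ∀ m, IsLineClass m → picInter m L = 1 → 0 ≤ picInter s m) :
    (linesMetBy s L).ncard = 5 := by
  have hsum := ncard_linesMetBy_add_ncard_linesMissedBy hL hsnn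
  rw [ncard_linesMissedBy_eq_ncard_linesMetBy hL hsF hsnn] at hsum
  omega

lemma picInter_eq_zero_of_picInter_section_eq (hL : IsLineClass L)
    (hsF : picInter s (fibreClass L) = 1)
    (hm : m ∈ meetingLines L) (hm' : m' ∈ meetingLines L)
    (hsm : picInter s m = picInter s m') (hne : m ≠ m') : picInter m m' = 0 := by
  refine picInter_eq_zero_of_mem_meetingLines hL hm hm' hne fun h => ?_
  have := picInter_section_fibreClass_sub (m := m) hsF
  rw [← h] at this
  omega

lemma finsum_meetingLines_picInter_section (hL : IsLineClass L)
    (hsF : picInter s (fibreClass L) = 1)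
    (hsnn : ∀ m, IsLineClass m → picInter m L = 1 → 0 ≤ picInter s m) :
    ∑ᶠ m ∈ meetingLines L, picInter m s = 5 := by
  have hfin := meetingLines_finite L
  rw [meetingLines_eq_union hsnn] at hfin ⊢
  have hone : ∀ m ∈ linesMetBy s L, picInter m s = 1 := fun m hm =>
    (picInter_comm m s).trans (picInter_section_eq_one_of_mem_linesMetBy hL hsF hsnn hm)
  rw [finsum_mem_union disjoint_linesMetBy_linesMissedBy (hfin.subset Set.subset_union_left)
      (hfin.subset Set.subset_union_right), finsum_mem_congr rfl hone,
    finsum_mem_eq_zero_of_forall_eq_zero fun m hm => (picInter_comm m s).trans hm.2, add_zero,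
    ← Nat.cast_one, ← Nat.cast_finsum_mem (hfin.subset Set.subset_union_left), finsum_one,
    ncard_linesMetBy hL hsF hsnn, Nat.cast_ofNat]

end ConicBundleSection

section Galois

variable {e : (Fin 7 → ℤ) ≃+ (Fin 7 → ℤ)} {L s m : Fin 7 → ℤ}

lemma isLineClass_map_iff (he : ∀ a b, picInter (e a) (e b) = picInter a b) (hK : e KX = KX) :
    IsLineClass (e m) ↔ IsLineClass m := by
  have hKm : picInter KX (e m) = picInter KX m := by simpa [hK] using he KX m
  rw [IsLineClass, IsLineClass, he, hKm]

lemma map_mem_meetingLines_iff (he : ∀ a b, picInter (e a) (e b) = picInter a b)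
    (hK : e KX = KX) (hL : e L = L) : e m ∈ meetingLines L ↔ m ∈ meetingLines L := by
  have hmL : picInter (e m) L = picInter m L := by simpa [hL] using he m L
  simp only [meetingLines, Set.mem_ofPred_eq, isLineClass_map_iff he hK, e.injective.ne_iff' hL,
    hmL]

lemma image_setOf_meetingLines (he : ∀ a b, picInter (e a) (e b) = picInter a b)
    (hK : e KX = KX) (hL : e L = L) (hs : e s = s) (p : ℤ → Prop) :
    e '' {m | m ∈ meetingLines L ∧ p (picInter s m)} =
      {m | m ∈ meetingLines L ∧ p (picInter s m)} := by
  have hmem : ∀ m, e m ∈ {m | m ∈ meetingLines L ∧ p (picInter s m)} ↔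
      m ∈ {m | m ∈ meetingLines L ∧ p (picInter s m)} := fun m => by
    have hsm : picInter s (e m) = picInter s m := by simpa [hs] using he s m
    simp only [Set.mem_ofPred_eq, map_mem_meetingLines_iff he hK hL, hsm]
  ext x
  constructor
  · rintro ⟨m, hm, rfl⟩
    exact (hmem m).mpr hm
  · intro hx
    exact ⟨e.symm x, (hmem _).mp (by simpa using hx), e.apply_symm_apply x⟩

end Galois

theorem stmt7_general
    (ρ : G →* Multiplicative (AddAut (Fin 7 → ℤ)))
    (hint : ∀ (g : G) (a b : Fin 7 → ℤ), picInter ((ρ g).toAdd a) ((ρ g).toAdd b) = picInter a b)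
    (hK : ∀ g : G, (ρ g).toAdd KX = KX)
    (L : Fin 7 → ℤ) (hL : IsLineClass L) (hLfix : ∀ g : G, (ρ g).toAdd L = L)
    (s : Fin 7 → ℤ) (hsfix : ∀ g : G, (ρ g).toAdd s = s)
    (hsF : picInter s (-KX - L) = 1)
    (hsnn : ∀ m, IsLineClass m → picInter m L = 1 → 0 ≤ picInter s m) :
    (Set.ncard {m : Fin 7 → ℤ | IsLineClass m ∧ m ≠ L ∧ picInter m L = 1} = 10) ∧
    ({m : Fin 7 → ℤ | IsLineClass m ∧ m ≠ L ∧ picInter m L = 1} =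
      {m | (IsLineClass m ∧ m ≠ L ∧ picInter m L = 1) ∧ 0 < picInter s m} ∪
      {m | (IsLineClass m ∧ m ≠ L ∧ picInter m L = 1) ∧ picInter s m = 0}) ∧
    (Set.ncard {m : Fin 7 → ℤ | (IsLineClass m ∧ m ≠ L ∧ picInter m L = 1) ∧
        0 < picInter s m} = 5) ∧
    (Set.ncard {m : Fin 7 → ℤ | (IsLineClass m ∧ m ≠ L ∧ picInter m L = 1) ∧
        picInter s m = 0} = 5) ∧
    (∀ g : G, (fun m => (ρ g).toAdd m) '' {m : Fin 7 → ℤ |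
        (IsLineClass m ∧ m ≠ L ∧ picInter m L = 1) ∧ 0 < picInter s m} =
        {m | (IsLineClass m ∧ m ≠ L ∧ picInter m L = 1) ∧ 0 < picInter s m}) ∧
    (∀ g : G, (fun m => (ρ g).toAdd m) '' {m : Fin 7 → ℤ |
        (IsLineClass m ∧ m ≠ L ∧ picInter m L = 1) ∧ picInter s m = 0} =
        {m | (IsLineClass m ∧ m ≠ L ∧ picInter m L = 1) ∧ picInter s m = 0}) ∧
    (∀ m m', ((IsLineClass m ∧ m ≠ L ∧ picInter m L = 1) ∧ 0 < picInter s m) →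
        ((IsLineClass m' ∧ m' ≠ L ∧ picInter m' L = 1) ∧ 0 < picInter s m') →
        m ≠ m' → picInter m m' = 0) ∧
    (∀ m m', ((IsLineClass m ∧ m ≠ L ∧ picInter m L = 1) ∧ picInter s m = 0) →
        ((IsLineClass m' ∧ m' ≠ L ∧ picInter m' L = 1) ∧ picInter s m' = 0) →
        m ≠ m' → picInter m m' = 0) ∧
    (∑ᶠ m ∈ {m : Fin 7 → ℤ | IsLineClass m ∧ m ≠ L ∧ picInter m L = 1},
        picInter m s) = 5 := by
  have hmet := ncard_linesMetBy hL hsF hsnn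
  refine ⟨ncard_meetingLines hL, meetingLines_eq_union hsnn, hmet,
    (ncard_linesMissedBy_eq_ncard_linesMetBy hL hsF hsnn).trans hmet,
    fun g => image_setOf_meetingLines (hint g) (hK g) (hLfix g) (hsfix g) (0 < ·),
    fun g => image_setOf_meetingLines (hint g) (hK g) (hLfix g) (hsfix g) (· = 0),
    fun m m' hm hm' => picInter_eq_zero_of_picInter_section_eq hL hsF hm.1 hm'.1 ?_,
    fun m m' hm hm' => picInter_eq_zero_of_picInter_section_eq hL hsF hm.1 hm'.1 ?_,
    finsum_meetingLines_picInter_section hL hsF hsnn⟩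
  · rw [picInter_section_eq_one_of_mem_linesMetBy hL hsF hsnn hm,
      picInter_section_eq_one_of_mem_linesMetBy hL hsF hsnn hm']
  · rw [hm.2, hm'.2]

/-- Let `L` be a `k`-line on a smooth cubic surface with conic bundle
`f : X → ℙ¹` (fibre class `F = -KX - L`) and let `s` be the class of a
section of `f` (so `s·F = 1` and `s` meets every line of a degenerate fibre
non-negatively).  The 10 lines of `X̄` meeting `L` split into the two
Galois-stable sets `𝔏₁` (components met by `s`) and `𝔏₂` (components not
met by `s`), each consisting of 5 pairwise skew lines, and
`(𝔏₁ + 𝔏₂)·s = 5`. -/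
theorem stmt7
    (ρ : G →* Multiplicative (AddAut (Fin 7 → ℤ)))
    (hlines : ∀ (g : G) (l : Fin 7 → ℤ), IsLineClass l → IsLineClass ((ρ g).toAdd l))
    (hint : ∀ (g : G) (a b : Fin 7 → ℤ), picInter ((ρ g).toAdd a) ((ρ g).toAdd b) = picInter a b)
    (hK : ∀ g : G, (ρ g).toAdd KX = KX)
    (L : Fin 7 → ℤ) (hL : IsLineClass L) (hLfix : ∀ g : G, (ρ g).toAdd L = L)
    (s : Fin 7 → ℤ) (hsfix : ∀ g : G, (ρ g).toAdd s = s)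
    (hsF : picInter s (-KX - L) = 1)
    (hsnn : ∀ m, IsLineClass m → picInter m L = 1 → 0 ≤ picInter s m) :
    (Set.ncard {m : Fin 7 → ℤ | IsLineClass m ∧ m ≠ L ∧ picInter m L = 1} = 10) ∧
    ({m : Fin 7 → ℤ | IsLineClass m ∧ m ≠ L ∧ picInter m L = 1} =
      {m | (IsLineClass m ∧ m ≠ L ∧ picInter m L = 1) ∧ 0 < picInter s m} ∪
      {m | (IsLineClass m ∧ m ≠ L ∧ picInter m L = 1) ∧ picInter s m = 0}) ∧
    (Set.ncard {m : Fin 7 → ℤ | (IsLineClass m ∧ m ≠ L ∧ picInter m L = 1) ∧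
        0 < picInter s m} = 5) ∧
    (Set.ncard {m : Fin 7 → ℤ | (IsLineClass m ∧ m ≠ L ∧ picInter m L = 1) ∧
        picInter s m = 0} = 5) ∧
    (∀ g : G, (fun m => (ρ g).toAdd m) '' {m : Fin 7 → ℤ |
        (IsLineClass m ∧ m ≠ L ∧ picInter m L = 1) ∧ 0 < picInter s m} =
        {m | (IsLineClass m ∧ m ≠ L ∧ picInter m L = 1) ∧ 0 < picInter s m}) ∧
    (∀ g : G, (fun m => (ρ g).toAdd m) '' {m : Fin 7 → ℤ |
        (IsLineClass m ∧ m ≠ L ∧ picInter m L = 1) ∧ picInter s m = 0} =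
        {m | (IsLineClass m ∧ m ≠ L ∧ picInter m L = 1) ∧ picInter s m = 0}) ∧
    (∀ m m', ((IsLineClass m ∧ m ≠ L ∧ picInter m L = 1) ∧ 0 < picInter s m) →
        ((IsLineClass m' ∧ m' ≠ L ∧ picInter m' L = 1) ∧ 0 < picInter s m') →
        m ≠ m' → picInter m m' = 0) ∧
    (∀ m m', ((IsLineClass m ∧ m ≠ L ∧ picInter m L = 1) ∧ picInter s m = 0) →
        ((IsLineClass m' ∧ m' ≠ L ∧ picInter m' L = 1) ∧ picInter s m' = 0) →
        m ≠ m' → picInter m m' = 0) ∧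
    (∑ᶠ m ∈ {m : Fin 7 → ℤ | IsLineClass m ∧ m ≠ L ∧ picInter m L = 1},
        picInter m s) = 5 :=
  stmt7_general ρ hint hK L hL hLfix s hsfix hsF hsnn
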